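/- Let V be a real normed vector space of dimension 2n equipped with a nondegenerate alternating bilinear form ω, and let A be a set of smooth functions V → ℝ such that {a, b} = 0 for all a, b ∈ A. Let p ∈ V and suppose there exist a_1, …, a_n ∈ A whose differentials fderiv ℝ a_1 p, …, fderiv ℝ a_n p are linearly independent in the dual of V. Then the subspace E_p = span{ X_a(p) : a ∈ A } has dimension exactly n; that is, E_p is a Lagrangian subspace of (V, ω). -/

import Mathlib

/-- If `A` is a Poisson-commutative family of smooth functions on a
`2n`-dimensional real symplectic vector space, and at a point `p` there are
`a 1, ..., a n ∈ A` with linearly independent differentials, then the span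
`E_p` of the Hamiltonian vectors `X_a p`, `a ∈ A`, has dimension exactly `n`,
i.e. it is a Lagrangian subspace of `(V, ω)`. -/
theorem span_hamiltonian_lagrangian_of_rich_poisson_commutative
    (V : Type*) [NormedAddCommGroup V] [NormedSpace ℝ V] [FiniteDimensional ℝ V]
    (n : ℕ) (hdim : Module.finrank ℝ V = 2 * n)
    (ω : V →ₗ[ℝ] V →ₗ[ℝ] ℝ)
    (halt : ∀ v : V, ω v v = 0)
    (hnd : ∀ v : V, (∀ w : V, ω v w = 0) → v = 0)
    (A : Set (V → ℝ)) (hA : ∀ a ∈ A, ContDiff ℝ (⊤ : ℕ∞) a)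
    (X : (V → ℝ) → V → V)
    (hX : ∀ a ∈ A, ∀ x v : V, ω (X a x) v = fderiv ℝ a x v)
    (hcomm : ∀ a ∈ A, ∀ b ∈ A, ∀ x : V, ω (X a x) (X b x) = 0)
    (p : V)
    (a : Fin n → V → ℝ) (ha : ∀ i, a i ∈ A)
    (hind : LinearIndependent ℝ (fun i => fderiv ℝ (a i) p)) :
    Module.finrank ℝ (Submodule.span ℝ {v : V | ∃ a ∈ A, X a p = v}) = n ∧
    (∀ v ∈ Submodule.span ℝ {v : V | ∃ a ∈ A, X a p = v},
      ∀ w ∈ Submodule.span ℝ {v : V | ∃ a ∈ A, X a p = v}, ω v w = 0) := by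
  set S : Set V := {v : V | ∃ a ∈ A, X a p = v} with hS
  set E := Submodule.span ℝ S with hE
  -- skew-symmetry
  have hskew : ∀ v w : V, ω v w = - ω w v := by
    intro v w
    have h := halt (v + w)
    simp only [map_add, LinearMap.add_apply, halt] at h
    linarith
  -- reflexivity
  have hrefl : ω.IsRefl := by
    intro v w h
    rw [hskew w v, h, neg_zero]
  have hndB : LinearMap.BilinForm.Nondegenerate ω :=
    hrefl.nondegenerate_iff_separatingLeft.mpr fun v hv => hnd v hv
  -- isotropy
  have hiso : ∀ v ∈ E, ∀ w ∈ E, ω v w = 0 := by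
    intro v hv w hw
    induction hv using Submodule.span_induction with
    | mem x hx =>
      induction hw using Submodule.span_induction with
      | mem y hy =>
        obtain ⟨f, hf, rfl⟩ := hx
        obtain ⟨g, hg, rfl⟩ := hy
        exact hcomm f hf g hg p
      | zero => simp
      | add y z _ _ hy hz => simp [hy, hz]
      | smul c y _ hy => simp [hy]
    | zero => simp
    | add x y _ _ hx hy => simp [hx, hy]
    | smul c x _ hx => simp [hx]
  refine ⟨?_, hiso⟩
  -- upper bound: E is isotropic, so E ≤ orthogonal E
  have hle : E ≤ LinearMap.BilinForm.orthogonal ω E := fun v hv w hw => hiso w hw v hv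
  have hub : Module.finrank ℝ E ≤ n := by
    have h1 := Submodule.finrank_mono hle
    have h2 := LinearMap.BilinForm.finrank_orthogonal hndB E
    have h3 : Module.finrank ℝ E ≤ Module.finrank ℝ V := Submodule.finrank_le E
    omega
  -- lower bound
  have hXind : LinearIndependent ℝ (fun i => X (a i) p) := by
    have h1 : LinearIndependent ℝ (fun i => ((fderiv ℝ (a i) p : V →L[ℝ] ℝ) : V →ₗ[ℝ] ℝ)) := by
      have : Function.Injective (ContinuousLinearMap.coeLM ℝ : (V →L[ℝ] ℝ) →ₗ[ℝ] (V →ₗ[ℝ] ℝ)) := by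
        intro f g h
        ext x
        exact congrFun (congrArg DFunLike.coe h) x
      exact hind.map' (ContinuousLinearMap.coeLM ℝ) (LinearMap.ker_eq_bot.mpr this)
    have heq : (fun i => ω (X (a i) p)) =
        fun i => ((fderiv ℝ (a i) p : V →L[ℝ] ℝ) : V →ₗ[ℝ] ℝ) := by
      funext i
      ext v
      exact hX (a i) (ha i) p v
    have h2 : LinearIndependent ℝ (fun i => ω (X (a i) p)) := heq ▸ h1
    exact h2.of_comp ω
  have hlb : n ≤ Module.finrank ℝ E := by
    have hsub : Set.range (fun i => X (a i) p) ⊆ S := by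
      rintro v ⟨i, rfl⟩
      exact ⟨a i, ha i, rfl⟩
    have := Submodule.finrank_mono (Submodule.span_mono hsub (R := ℝ))
    rwa [finrank_span_eq_card hXind, Fintype.card_fin] at this
  omega
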